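/- arXiv:hep-th/9812150 — 2 statements merged into one kernel-verified Lean document; each statement's English description precedes it below -/
import Mathlib

section
/- Let f be holomorphic in the open square Δ_b = {η ∈ ℂ : |Re η| < b, |Im η| < b} and continuous on its closure, and suppose that |f(η)| ≤ M·|Im η|^{-n} for all η in the closed square, where n > 0 and M are constants. Then for every real β with -b ≤ β ≤ b one has |f(iβ)| ≤ 5^{n/2} · M · b^{-n}. -/
/-!
Multiply `f` by the weight `(b² - η²)ⁿ`. Its modulus is at least `b^{2n}` on the imaginary axis,
while on the boundary of the square `|b² - η²| ≤ √5 · b · |Im η|`, so the weighted function is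
bounded there by `5^{n/2} bⁿ M` thanks to `|f(η)| |Im η|ⁿ ≤ M`. The maximum modulus principle
carries this bound to `iβ`, and dividing by `b^{2n}` gives the claim.
-/

open Set Complex

lemma DiffContOnCl.cpow_mul {U : Set ℂ} {w f : ℂ → ℂ} {r : ℂ} (hf : DiffContOnCl ℂ f U)
    (hr : 0 < r.re) (hw : Differentiable ℂ w) (hU : ∀ z ∈ U, w z ∈ slitPlane)
    (hcl : ∀ z ∈ closure U, 0 ≤ (w z).re) :
    DiffContOnCl ℂ (fun z => w z ^ r * f z) U :=
  ⟨(hw.differentiableOn.cpow_const hU).mul hf.differentiableOn,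
    ContinuousOn.mul (fun z hz => ((continuousAt_cpow_const_of_re_pos (.inl (hcl z hz)) hr).comp
      (hw z).continuousAt).continuousWithinAt) hf.continuousOn⟩

def openSquare (b : ℝ) : Set ℂ := {η : ℂ | |η.re| < b ∧ |η.im| < b}

section Square

variable {b : ℝ}

lemma openSquare_eq_reProdIm (b : ℝ) : openSquare b = Ioo (-b) b ×ℂ Ioo (-b) b := by
  ext z
  simp [openSquare, mem_reProdIm, abs_lt]

lemma closure_openSquare (hb : 0 < b) :
    closure (openSquare b) = {η : ℂ | |η.re| ≤ b ∧ |η.im| ≤ b} := by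
  rw [openSquare_eq_reProdIm, closure_reProdIm, closure_Ioo (by linarith)]
  ext z
  simp [mem_reProdIm, abs_le]

lemma isBounded_openSquare (b : ℝ) : Bornology.IsBounded (openSquare b) := by
  rw [openSquare_eq_reProdIm]
  exact (Metric.isBounded_Ioo _ _).reProdIm (Metric.isBounded_Ioo _ _)

lemma sq_re_eq_or_sq_im_eq_of_mem_frontier_openSquare (hb : 0 < b) {z : ℂ}
    (hz : z ∈ frontier (openSquare b)) : z.re ^ 2 = b ^ 2 ∨ z.im ^ 2 = b ^ 2 := by
  rw [openSquare_eq_reProdIm, frontier_reProdIm, frontier_Ioo (by linarith)] at hz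
  rcases hz with ⟨-, hy | hy⟩ | ⟨hx | hx, -⟩ <;> simp_all

lemma abs_re_le_and_abs_im_le_of_mem_frontier_openSquare (hb : 0 < b) {z : ℂ}
    (hz : z ∈ frontier (openSquare b)) : |z.re| ≤ b ∧ |z.im| ≤ b := by
  simpa [closure_openSquare hb] using frontier_subset_closure hz

end Square

section Weight

variable (b : ℝ) (z : ℂ)

lemma re_ofReal_sq_sub_sq : ((b : ℂ) ^ 2 - z ^ 2).re = b ^ 2 - z.re ^ 2 + z.im ^ 2 := by
  simp [sq]
  ring

lemma re_ofReal_sq_sub_sq_pos (h : |z.re| < b) : 0 < ((b : ℂ) ^ 2 - z ^ 2).re := by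
  rw [re_ofReal_sq_sub_sq]
  nlinarith [sq_lt_sq' (abs_lt.1 h).1 (abs_lt.1 h).2, sq_nonneg z.im]

lemma re_ofReal_sq_sub_sq_nonneg (h : |z.re| ≤ b) : 0 ≤ ((b : ℂ) ^ 2 - z ^ 2).re := by
  rw [re_ofReal_sq_sub_sq]
  nlinarith [sq_le_sq' (abs_le.1 h).1 (abs_le.1 h).2, sq_nonneg z.im]

lemma norm_ofReal_sq_sub_sq_sq :
    ‖(b : ℂ) ^ 2 - z ^ 2‖ ^ 2 = (b ^ 2 - z.re ^ 2 + z.im ^ 2) ^ 2 + (2 * z.re * z.im) ^ 2 := by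
  rw [Complex.sq_norm, normSq_apply, re_ofReal_sq_sub_sq]
  simp [sq]
  ring

lemma norm_ofReal_sq_sub_I_mul_sq (β : ℝ) : ‖(b : ℂ) ^ 2 - (I * β) ^ 2‖ = b ^ 2 + β ^ 2 := by
  rw [mul_pow, I_sq, neg_one_mul, sub_neg_eq_add, ← ofReal_pow, ← ofReal_pow, ← ofReal_add,
    norm_real, Real.norm_of_nonneg (by positivity)]

end Weight

section WeightedFunction

variable {b n M : ℝ} {f : ℂ → ℂ}

lemma diffContOnCl_openSquare_weight_mul (hb : 0 < b) (hn : 0 < n)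
    (hf : DiffContOnCl ℂ f (openSquare b)) :
    DiffContOnCl ℂ (fun η => ((b : ℂ) ^ 2 - η ^ 2) ^ (n : ℂ) * f η) (openSquare b) := by
  refine hf.cpow_mul (by simpa using hn) (by fun_prop)
    (fun z hz => .inl (re_ofReal_sq_sub_sq_pos b z hz.1)) (fun z hz => ?_)
  rw [closure_openSquare hb] at hz
  exact re_ofReal_sq_sub_sq_nonneg b z hz.1

lemma norm_ofReal_sq_sub_sq_le_of_mem_frontier_openSquare (hb : 0 < b) {z : ℂ}
    (hz : z ∈ frontier (openSquare b)) : ‖(b : ℂ) ^ 2 - z ^ 2‖ ≤ √5 * b * |z.im| := by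
  obtain ⟨hre, him⟩ := abs_re_le_and_abs_im_le_of_mem_frontier_openSquare hb hz
  have hx : z.re ^ 2 ≤ b ^ 2 := sq_le_sq' (abs_le.1 hre).1 (abs_le.1 hre).2
  have hy : z.im ^ 2 ≤ b ^ 2 := sq_le_sq' (abs_le.1 him).1 (abs_le.1 him).2
  have hsq : ‖(b : ℂ) ^ 2 - z ^ 2‖ ^ 2 ≤ (√5 * b * |z.im|) ^ 2 := by
    have hrhs : (√5 * b * |z.im|) ^ 2 = 5 * b ^ 2 * z.im ^ 2 := by
      rw [mul_pow, mul_pow, Real.sq_sqrt (by norm_num), sq_abs]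
    rw [norm_ofReal_sq_sub_sq_sq, hrhs]
    rcases sq_re_eq_or_sq_im_eq_of_mem_frontier_openSquare hb hz with h | h <;> rw [h] <;>
      nlinarith [sq_nonneg z.re, sq_nonneg z.im]
  exact (pow_le_pow_iff_left₀ (norm_nonneg _) (by positivity) two_ne_zero).1 hsq

lemma norm_weight_mul_le_of_mem_frontier_openSquare (hb : 0 < b) (hn : 0 ≤ n)
    (hbound : ∀ η : ℂ, |η.re| ≤ b → |η.im| ≤ b → ‖f η‖ * |η.im| ^ n ≤ M) {z : ℂ}
    (hz : z ∈ frontier (openSquare b)) :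
    ‖((b : ℂ) ^ 2 - z ^ 2) ^ (n : ℂ) * f z‖ ≤ b ^ n * (5 ^ (n / 2) * M) := by
  obtain ⟨hre, him⟩ := abs_re_le_and_abs_im_le_of_mem_frontier_openSquare hb hz
  calc ‖((b : ℂ) ^ 2 - z ^ 2) ^ (n : ℂ) * f z‖ = ‖(b : ℂ) ^ 2 - z ^ 2‖ ^ n * ‖f z‖ := by
        rw [norm_mul, norm_cpow_real]
    _ ≤ (√5 * b * |z.im|) ^ n * ‖f z‖ := by
        gcongr
        exact norm_ofReal_sq_sub_sq_le_of_mem_frontier_openSquare hb hz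
    _ = b ^ n * (√5 ^ n * (‖f z‖ * |z.im| ^ n)) := by
        rw [Real.mul_rpow (by positivity) (abs_nonneg _), Real.mul_rpow (by positivity) hb.le]
        ring
    _ ≤ b ^ n * (5 ^ (n / 2) * M) := by
        rw [← Real.rpow_div_two_eq_sqrt _ (by norm_num)]
        gcongr
        exact hbound z hre him

end WeightedFunction

lemma le_mul_rpow_neg_of_rpow_mul_le {b β n x C : ℝ} (hb : 0 < b) (hn : 0 ≤ n) (hx : 0 ≤ x)
    (h : (b ^ 2 + β ^ 2) ^ n * x ≤ b ^ n * C) : x ≤ C * b ^ (-n) := by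
  have hmono : b ^ n * b ^ n ≤ (b ^ 2 + β ^ 2) ^ n := by
    rw [← Real.mul_rpow hb.le hb.le]
    exact Real.rpow_le_rpow (by positivity) (by nlinarith [sq_nonneg β]) hn
  rw [Real.rpow_neg hb.le, ← div_eq_mul_inv, le_div_iff₀ (by positivity)]
  nlinarith [mul_le_mul_of_nonneg_right hmono hx, Real.rpow_pos_of_pos hb n]

theorem stmt_0_general (b n M : ℝ) (hb : 0 < b) (hn : 0 < n) (f : ℂ → ℂ)
    (hf : DifferentiableOn ℂ f {η : ℂ | |η.re| < b ∧ |η.im| < b})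
    (hc : ContinuousOn f {η : ℂ | |η.re| ≤ b ∧ |η.im| ≤ b})
    (hbound : ∀ η : ℂ, |η.re| ≤ b → |η.im| ≤ b → ‖f η‖ * |η.im| ^ n ≤ M) :
    ∀ β : ℝ, -b ≤ β → β ≤ b →
      ‖f (Complex.I * β)‖ ≤ (5 : ℝ) ^ (n / 2) * M * b ^ (-n) := by
  intro β hβ₁ hβ₂
  have hg := diffContOnCl_openSquare_weight_mul hb hn ⟨hf, closure_openSquare hb ▸ hc⟩
  have hmem : I * β ∈ closure (openSquare b) := by
    simpa [closure_openSquare hb, abs_le, hb.le] using ⟨hβ₁, hβ₂⟩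
  have key := norm_le_of_forall_mem_frontier_norm_le (isBounded_openSquare b) hg
    (fun z => norm_weight_mul_le_of_mem_frontier_openSquare hb hn.le hbound) hmem
  rw [norm_mul, norm_cpow_real, norm_ofReal_sq_sub_I_mul_sq] at key
  exact le_mul_rpow_neg_of_rpow_mul_le hb hn.le (norm_nonneg _) key

theorem stmt_0 (b n M : ℝ) (hb : 0 < b) (hn : 0 < n) (hM : 0 ≤ M) (f : ℂ → ℂ)
    (hf : DifferentiableOn ℂ f {η : ℂ | |η.re| < b ∧ |η.im| < b})
    (hc : ContinuousOn f {η : ℂ | |η.re| ≤ b ∧ |η.im| ≤ b})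
    (hbound : ∀ η : ℂ, |η.re| ≤ b → |η.im| ≤ b → ‖f η‖ * |η.im| ^ n ≤ M) :
    ∀ β : ℝ, -b ≤ β → β ≤ b →
      ‖f (Complex.I * β)‖ ≤ (5 : ℝ) ^ (n / 2) * M * b ^ (-n) :=
  stmt_0_general b n M hb hn f hf hc hbound
end

section
/- Let f be holomorphic in a neighbourhood of 0 in ℂ and on a star-shaped domain U, let α > 0 and n a positive integer, and let D_n denote n-fold differentiation and P_α the Riemann–Liouville primitive of order α based at 0. Then on U minus a cut where θ^{α-n} is defined: (D_n P_α f)(θ) - (P_α D_n f)(θ) = Σ_{p=0}^{n-1} (D_p f)(0) · θ^{α-n+p} / Γ(α-n+p+1). -/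
/-- Riemann–Liouville primitive of order `α` in the complex domain, taken along the
segment `[0, θ]`. -/
noncomputable def Pfrac (α : ℝ) (f : ℂ → ℂ) (θ : ℂ) : ℂ :=
  (Complex.Gamma (α : ℂ))⁻¹ * θ ^ (α : ℂ) *
    ∫ t in (0:ℝ)..1, (((1 - t) ^ (α - 1) : ℝ) : ℂ) * f (t • θ)

/-! Integrating by parts along the segment `[0, θ]` gives
`P_α g (θ) = g 0 · θ^α / Γ(α + 1) + P_{α+1} g' (θ)`; iterating `n` times splits `P_α f` into
`∑_{p<n} f⁽ᵖ⁾(0) θ^(α+p) / Γ(α+p+1)` and `P_{α+n} f⁽ⁿ⁾`. Off the cut, differentiating under the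
integral sign and integrating by parts once more gives `(P_{β+1} g)' = P_β g`, so `n`
differentiations turn `P_{α+n} f⁽ⁿ⁾` into `P_α f⁽ⁿ⁾`, while each power `θ^(α+p)` picks up the
falling factorial `(α+p)(α+p-1)⋯(α+p-n+1) = Γ(α+p+1) / Γ(α+p-n+1)`. -/

open Complex MeasureTheory Set Metric Filter Topology intervalIntegral

/-- `Gamma` is `0` at its poles, so `(Gamma _)⁻¹` here is the entire function `1 / Γ`. -/
lemma descPochhammer_eval_mul_inv_Gamma_add_one (x : ℂ) (n : ℕ) :
    (descPochhammer ℂ n).eval x * (Gamma (x + 1))⁻¹ = (Gamma (x - n + 1))⁻¹ := by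
  induction n with
  | zero => simp
  | succ n ih =>
    have hshift : x - (n + 1 : ℕ) + 1 = x - n := by push_cast; ring
    rw [descPochhammer_succ_eval, mul_right_comm, ih, hshift]
    rcases eq_or_ne (x - n) 0 with h | h
    · simp [h]
    · rw [Gamma_add_one _ h, mul_inv, mul_right_comm, inv_mul_cancel₀ h, one_mul]

lemma hasDerivAt_descPochhammer_mul_cpow {z : ℂ} (hz : z ∈ slitPlane) (c : ℂ) (k : ℕ) :
    HasDerivAt (fun w => (descPochhammer ℂ k).eval c * w ^ (c - k))
      ((descPochhammer ℂ (k + 1)).eval c * z ^ (c - (k + 1 : ℕ))) z := by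
  refine ((hasStrictDerivAt_cpow_const (c := c - k) hz).hasDerivAt.const_mul
    ((descPochhammer ℂ k).eval c)).congr_deriv ?_
  rw [descPochhammer_succ_eval]
  push_cast
  ring_nf

lemma cpow_add_one {c : ℂ} (hc : c + 1 ≠ 0) (z : ℂ) : z ^ (c + 1) = z ^ c * z := by
  rcases eq_or_ne z 0 with rfl | hz
  · rw [zero_cpow hc, mul_zero]
  · rw [cpow_add _ _ hz, cpow_one]

lemma eqOn_iteratedDeriv_of_hasDerivAt {𝕜 E : Type*} [NontriviallyNormedField 𝕜]
    [NormedAddCommGroup E] [NormedSpace 𝕜 E] {V : Set 𝕜} {F : 𝕜 → E} {G : ℕ → 𝕜 → E} {N : ℕ}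
    (hV : IsOpen V) (h0 : EqOn F (G 0) V)
    (hG : ∀ k < N, ∀ z ∈ V, HasDerivAt (G k) (G (k + 1) z) z) {k : ℕ} (hk : k ≤ N) :
    EqOn (iteratedDeriv k F) (G k) V := by
  induction k with
  | zero => simpa using h0
  | succ k ih =>
    intro z hz
    have hEq : iteratedDeriv k F =ᶠ[𝓝 z] G k :=
      eventuallyEq_of_mem (hV.mem_nhds hz) (ih (by omega))
    rw [iteratedDeriv_succ, hEq.deriv_eq]
    exact (hG k (by omega) z hz).deriv

lemma DifferentiableOn.iteratedDeriv_of_isOpen {U : Set ℂ} {g : ℂ → ℂ} (hg : DifferentiableOn ℂ g U)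
    (hU : IsOpen U) (k : ℕ) : DifferentiableOn ℂ (iteratedDeriv k g) U := by
  rw [iteratedDeriv_eq_iterate]
  exact ((hg.analyticOnNhd hU).iterated_deriv k).differentiableOn

lemma intervalIntegrable_one_sub_rpow {γ : ℝ} (hγ : -1 < γ) :
    IntervalIntegrable (fun t : ℝ => (((1 - t) ^ γ : ℝ) : ℂ)) volume 0 1 := by
  have h := ((intervalIntegrable_rpow' (a := 0) (b := 1) hγ).comp_sub_left 1).symm
  simp only [sub_zero, sub_self] at h
  rw [intervalIntegrable_iff] at h ⊢
  exact h.ofReal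

lemma continuous_one_sub_rpow {β : ℝ} (hβ : 0 ≤ β) :
    Continuous fun t : ℝ => (((1 - t) ^ β : ℝ) : ℂ) :=
  continuous_ofReal.comp ((Real.continuous_rpow_const hβ).comp (continuous_const.sub continuous_id))

lemma hasDerivAt_one_sub_rpow (β : ℝ) {t : ℝ} (ht : t < 1) :
    HasDerivAt (fun s : ℝ => (((1 - s) ^ β : ℝ) : ℂ)) (-β * (((1 - t) ^ (β - 1) : ℝ) : ℂ)) t := by
  have h : HasDerivAt (fun s : ℝ => (1 - s) ^ β) (β * (1 - t) ^ (β - 1) * -1) t :=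
    (Real.hasDerivAt_rpow_const (Or.inl (sub_pos.mpr ht).ne')).comp t
      ((hasDerivAt_id t).const_sub 1)
  exact h.ofReal_comp.congr_deriv (by push_cast; ring)

section Segment

variable {U : Set ℂ} {g : ℂ → ℂ} {θ : ℂ}

lemma StarConvex.continuousOn_comp_smul (hstar : StarConvex ℝ 0 U) (hg : ContinuousOn g U)
    (hθ : θ ∈ U) : ContinuousOn (fun t : ℝ => g (t • θ)) (Icc 0 1) :=
  hg.comp (continuous_id.smul continuous_const).continuousOn
    fun _ ht => hstar.smul_mem hθ ht.1 ht.2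

lemma hasDerivAt_comp_smul {t : ℝ} (hg : DifferentiableAt ℂ g (t • θ)) :
    HasDerivAt (fun s : ℝ => g (s • θ)) (θ * deriv g (t • θ)) t := by
  have hsmul : HasDerivAt (fun s : ℝ => s • θ) θ t := by
    simpa using (hasDerivAt_id t).smul_const θ
  exact (hg.hasDerivAt.comp t hsmul).congr_deriv (mul_comm _ _)

lemma integral_deriv_mul_comp_smul (hU : IsOpen U) (hstar : StarConvex ℝ 0 U)
    (hg : DifferentiableOn ℂ g U) (hθ : θ ∈ U) {φ φ' : ℝ → ℂ} (hφ : ContinuousOn φ (Icc 0 1))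
    (hφφ' : ∀ t ∈ Ioo (0 : ℝ) 1, HasDerivAt φ (φ' t) t)
    (hφ' : IntervalIntegrable φ' volume 0 1) :
    ∫ t in (0:ℝ)..1, φ' t * g (t • θ)
      = φ 1 * g θ - φ 0 * g 0 - θ * ∫ t in (0:ℝ)..1, φ t * deriv g (t • θ) := by
  have hIcc : uIcc (0 : ℝ) 1 = Icc 0 1 := uIcc_of_le zero_le_one
  have hv' : ContinuousOn (fun t : ℝ => θ * deriv g (t • θ)) (Icc 0 1) :=
    continuousOn_const.mul (hstar.continuousOn_comp_smul (hg.deriv hU).continuousOn hθ)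
  have hibp := intervalIntegral.integral_mul_deriv_eq_deriv_mul_of_hasDerivAt
    (u := φ) (v := fun t : ℝ => g (t • θ)) (hIcc ▸ hφ)
    (hIcc ▸ hstar.continuousOn_comp_smul hg.continuousOn hθ)
    (by simpa using hφφ')
    (fun t ht => by
      rw [min_eq_left zero_le_one, max_eq_right zero_le_one] at ht
      exact hasDerivAt_comp_smul (hg.differentiableAt (hU.mem_nhds
        (hstar.smul_mem hθ ht.1.le ht.2.le))))
    hφ' (hv'.intervalIntegrable_of_Icc zero_le_one)
  have hpull : ∫ t in (0:ℝ)..1, φ t * (θ * deriv g (t • θ))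
      = θ * ∫ t in (0:ℝ)..1, φ t * deriv g (t • θ) := by
    rw [← intervalIntegral.integral_const_mul]
    exact intervalIntegral.integral_congr fun t _ => by ring
  simp only [one_smul, zero_smul] at hibp
  rw [← hpull]
  linear_combination hibp

lemma StarConvex.exists_closedBall_bound_comp_smul (hU : IsOpen U) (hstar : StarConvex ℝ 0 U)
    {h : ℂ → ℂ} (hh : ContinuousOn h U) (hθ : θ ∈ U) :
    ∃ ε > 0, closedBall θ ε ⊆ U ∧
      ∃ C, ∀ t ∈ Icc (0 : ℝ) 1, ∀ x ∈ closedBall θ ε, ‖h (t • x)‖ ≤ C := by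
  obtain ⟨ε, hε, hball⟩ := nhds_basis_closedBall.mem_iff.mp (hU.mem_nhds hθ)
  set K := (fun p : ℝ × ℂ => p.1 • p.2) '' (Icc (0 : ℝ) 1 ×ˢ closedBall θ ε)
  have hK : IsCompact K :=
    (isCompact_Icc.prod (isCompact_closedBall _ _)).image (continuous_fst.smul continuous_snd)
  have hKU : K ⊆ U := by
    rintro _ ⟨⟨t, x⟩, ⟨ht, hx⟩, rfl⟩
    exact hstar.smul_mem (hball hx) ht.1 ht.2
  obtain ⟨C, hC⟩ := hK.exists_bound_of_continuousOn (hh.mono hKU)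
  exact ⟨ε, hε, hball, C, fun t ht x hx => hC _ ⟨(t, x), ⟨ht, hx⟩, rfl⟩⟩


lemma hasDerivAt_integral_mul_comp_smul (hU : IsOpen U) (hstar : StarConvex ℝ 0 U)
    (hg : DifferentiableOn ℂ g U) (hθ : θ ∈ U) {k : ℝ → ℂ} (hk : IntervalIntegrable k volume 0 1) :
    HasDerivAt (fun x => ∫ t in (0:ℝ)..1, k t * g (t • x))
      (∫ t in (0:ℝ)..1, k t * (t * deriv g (t • θ))) θ := by
  have hIcc : uIcc (0 : ℝ) 1 = Icc 0 1 := uIcc_of_le zero_le_one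
  have hIoc : uIoc (0 : ℝ) 1 = Ioc 0 1 := uIoc_of_le zero_le_one
  obtain ⟨ε, hε, hball, C, hC⟩ :=
    hstar.exists_closedBall_bound_comp_smul hU (hg.deriv hU).continuousOn hθ
  have hint : ∀ x ∈ U, IntervalIntegrable (fun t => k t * g (t • x)) volume 0 1 := fun x hx =>
    hk.mul_continuousOn (hIcc ▸ hstar.continuousOn_comp_smul hg.continuousOn hx)
  have hint' : IntervalIntegrable (fun t : ℝ => k t * (t * deriv g (t • θ))) volume 0 1 :=
    hk.mul_continuousOn (hIcc ▸ continuous_ofReal.continuousOn.mul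
      (hstar.continuousOn_comp_smul (hg.deriv hU).continuousOn hθ))
  refine (intervalIntegral.hasDerivAt_integral_of_dominated_loc_of_deriv_le
    (F := fun x t => k t * g (t • x)) (F' := fun x t => k t * (t * deriv g (t • x)))
    (bound := fun t => ‖k t‖ * C) (ball_mem_nhds θ hε)
    (eventually_of_mem (closedBall_mem_nhds θ hε) fun x hx => (hint x (hball hx)).def'.1)
    (hint θ hθ) hint'.def'.1 (Eventually.of_forall fun t ht x hx => ?_) (hk.norm.mul_const C)
    (Eventually.of_forall fun t ht x hx => ?_)).2
  · rw [hIoc] at ht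
    have ht1 : ‖(t : ℂ)‖ ≤ 1 := by rw [norm_real, Real.norm_of_nonneg ht.1.le]; exact ht.2
    rw [norm_mul, norm_mul]
    gcongr
    calc ‖(t : ℂ)‖ * ‖deriv g (t • x)‖ ≤ ‖deriv g (t • x)‖ :=
          mul_le_of_le_one_left (norm_nonneg _) ht1
      _ ≤ C := hC t ⟨ht.1.le, ht.2⟩ x (ball_subset_closedBall hx)
  · rw [hIoc] at ht
    have htx : t • x ∈ U := hstar.smul_mem (hball (ball_subset_closedBall hx)) ht.1.le ht.2
    have hsmul : HasDerivAt (fun y : ℂ => t • y) (t : ℂ) x := by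
      simpa [Complex.real_smul] using (hasDerivAt_id x).const_mul (t : ℂ)
    exact (((hg.differentiableAt (hU.mem_nhds htx)).hasDerivAt.comp x hsmul).const_mul
      (k t)).congr_deriv (by rw [mul_comm (deriv g _)])


lemma mul_integral_mul_deriv_comp_smul (hU : IsOpen U) (hstar : StarConvex ℝ 0 U)
    (hg : DifferentiableOn ℂ g U) {β : ℝ} (hβ : 0 < β) (hθ : θ ∈ U) :
    θ * ∫ t in (0:ℝ)..1, (((1 - t) ^ β : ℝ) : ℂ) * (t * deriv g (t • θ))
      = β * (∫ t in (0:ℝ)..1, (((1 - t) ^ (β - 1) : ℝ) : ℂ) * g (t • θ))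
        - (β + 1) * ∫ t in (0:ℝ)..1, (((1 - t) ^ β : ℝ) : ℂ) * g (t • θ) := by
  have hk := continuous_one_sub_rpow hβ.le
  have hk' := intervalIntegrable_one_sub_rpow (γ := β - 1) (by linarith)
  have hgθ := hstar.continuousOn_comp_smul hg.continuousOn hθ
  have hIcc : uIcc (0 : ℝ) 1 = Icc 0 1 := uIcc_of_le zero_le_one
  -- `t (1 - t)^β` vanishes at both ends and `t (1 - t)^(β-1) = (1 - t)^(β-1) - (1 - t)^β`.
  have hφφ' : ∀ t ∈ Ioo (0 : ℝ) 1, HasDerivAt (fun s : ℝ => (s : ℂ) * (((1 - s) ^ β : ℝ) : ℂ))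
      (((β : ℂ) + 1) * (((1 - t) ^ β : ℝ) : ℂ) - β * (((1 - t) ^ (β - 1) : ℝ) : ℂ)) t := by
    intro t ht
    have hrpow : (1 - t) ^ β = (1 - t) ^ (β - 1) * (1 - t) := by
      rw [Real.rpow_sub_one (sub_pos.mpr ht.2).ne', div_mul_cancel₀ _ (sub_pos.mpr ht.2).ne']
    refine ((hasDerivAt_id t).ofReal_comp.mul (hasDerivAt_one_sub_rpow β ht.2)).congr_deriv ?_
    simp only [hrpow, id, ofReal_mul, ofReal_sub, ofReal_one]
    ring
  have hibp := integral_deriv_mul_comp_smul hU hstar hg hθ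
    (φ := fun t : ℝ => (t : ℂ) * (((1 - t) ^ β : ℝ) : ℂ)) (continuous_ofReal.mul hk).continuousOn
    hφφ' ((hk.intervalIntegrable 0 1).const_mul _ |>.sub (hk'.const_mul _))
  have hsplit : ∫ t in (0:ℝ)..1, (((β : ℂ) + 1) * (((1 - t) ^ β : ℝ) : ℂ)
      - β * (((1 - t) ^ (β - 1) : ℝ) : ℂ)) * g (t • θ)
      = (β + 1) * (∫ t in (0:ℝ)..1, (((1 - t) ^ β : ℝ) : ℂ) * g (t • θ))
        - β * ∫ t in (0:ℝ)..1, (((1 - t) ^ (β - 1) : ℝ) : ℂ) * g (t • θ) := by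
    simp only [sub_mul, mul_assoc]
    rw [intervalIntegral.integral_sub, intervalIntegral.integral_const_mul,
      intervalIntegral.integral_const_mul]
    · exact ((hk.intervalIntegrable 0 1).mul_continuousOn (hIcc ▸ hgθ)).const_mul _
    · exact (hk'.mul_continuousOn (hIcc ▸ hgθ)).const_mul _
  have hreorder : ∫ t in (0:ℝ)..1, (t : ℂ) * (((1 - t) ^ β : ℝ) : ℂ) * deriv g (t • θ)
      = ∫ t in (0:ℝ)..1, (((1 - t) ^ β : ℝ) : ℂ) * (t * deriv g (t • θ)) :=
    integral_congr fun t _ => by ring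
  simp only [hsplit, hreorder, sub_self, Real.zero_rpow hβ.ne', ofReal_zero, ofReal_one, mul_zero,
    zero_mul, sub_zero] at hibp
  linear_combination hibp


end Segment

lemma Pfrac_add_one (β : ℝ) (g : ℂ → ℂ) (θ : ℂ) :
    Pfrac (β + 1) g θ = (Gamma ((β : ℂ) + 1))⁻¹ * θ ^ ((β : ℂ) + 1) *
      ∫ t in (0:ℝ)..1, (((1 - t) ^ β : ℝ) : ℂ) * g (t • θ) := by
  simp only [Pfrac, add_sub_cancel_right, ofReal_add, ofReal_one]

section Pfrac

variable {U : Set ℂ} {g : ℂ → ℂ} {θ : ℂ}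

lemma Pfrac_eq_add_Pfrac_deriv (hU : IsOpen U) (hstar : StarConvex ℝ 0 U)
    (hg : DifferentiableOn ℂ g U) {α : ℝ} (hα : 0 < α) (hθ : θ ∈ U) :
    Pfrac α g θ = g 0 * θ ^ (α : ℂ) / Gamma ((α : ℂ) + 1) + Pfrac (α + 1) (deriv g) θ := by
  have hαC : (α : ℂ) ≠ 0 := ofReal_ne_zero.mpr hα.ne'
  have hibp := integral_deriv_mul_comp_smul hU hstar hg hθ
    (φ := fun t => -(α : ℂ)⁻¹ * (((1 - t) ^ α : ℝ) : ℂ))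
    (continuous_const.mul (continuous_one_sub_rpow hα.le)).continuousOn
    (fun t ht => ((hasDerivAt_one_sub_rpow α ht.2).const_mul _).congr_deriv
      (by field_simp))
    (intervalIntegrable_one_sub_rpow (by linarith))
  simp only [sub_self, sub_zero, Real.zero_rpow hα.ne', Real.one_rpow, ofReal_zero, ofReal_one,
    mul_zero, zero_mul, mul_assoc, intervalIntegral.integral_const_mul] at hibp
  rw [Pfrac, hibp, Pfrac_add_one, cpow_add_one (by exact_mod_cast (by linarith : α + 1 ≠ 0)),
    Gamma_add_one _ hαC]
  field_simp
  ring

lemma Pfrac_eq_sum_add_Pfrac_iteratedDeriv (hU : IsOpen U) (hstar : StarConvex ℝ 0 U)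
    (hg : DifferentiableOn ℂ g U) {α : ℝ} (hα : 0 < α) (hθ : θ ∈ U) (k : ℕ) :
    Pfrac α g θ = (∑ p ∈ Finset.range k,
        iteratedDeriv p g 0 * θ ^ ((α : ℂ) + p) / Gamma ((α : ℂ) + p + 1))
      + Pfrac (α + k) (iteratedDeriv k g) θ := by
  induction k with
  | zero => simp
  | succ k ih =>
    rw [ih, Finset.sum_range_succ, Pfrac_eq_add_Pfrac_deriv hU hstar
      (hg.iteratedDeriv_of_isOpen hU k) (by positivity) hθ, ← iteratedDeriv_succ]
    push_cast
    ring_nf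

lemma hasDerivAt_Pfrac_add_one (hU : IsOpen U) (hstar : StarConvex ℝ 0 U)
    (hg : DifferentiableOn ℂ g U) {β : ℝ} (hβ : 0 < β) (hθ : θ ∈ U) (hθs : θ ∈ slitPlane) :
    HasDerivAt (Pfrac (β + 1) g) (Pfrac β g θ) θ := by
  have hβC : (β : ℂ) ≠ 0 := ofReal_ne_zero.mpr hβ.ne'
  have hΓ : Gamma (β : ℂ) ≠ 0 := Gamma_ne_zero_of_re_pos (by simpa using hβ)
  have hpow : HasDerivAt (fun x => x ^ ((β : ℂ) + 1)) (((β : ℂ) + 1) * θ ^ (β : ℂ)) θ :=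
    (hasStrictDerivAt_cpow_const hθs).hasDerivAt.congr_deriv (by rw [add_sub_cancel_right])
  have hint := hasDerivAt_integral_mul_comp_smul hU hstar hg hθ
    ((continuous_one_sub_rpow hβ.le).intervalIntegrable 0 1)
  have hPfrac : Pfrac (β + 1) g = fun x => (Gamma ((β : ℂ) + 1))⁻¹ *
      (x ^ ((β : ℂ) + 1) * ∫ t in (0:ℝ)..1, (((1 - t) ^ β : ℝ) : ℂ) * g (t • x)) :=
    funext fun x => by rw [Pfrac_add_one, mul_assoc]
  rw [hPfrac]
  refine ((hpow.mul hint).const_mul _).congr_deriv ?_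
  have hIBP := mul_integral_mul_deriv_comp_smul hU hstar hg hβ hθ
  rw [Pfrac, cpow_add_one (by exact_mod_cast (by linarith : β + 1 ≠ 0)), Gamma_add_one _ hβC]
  generalize ∫ t in (0:ℝ)..1, (((1 - t) ^ β : ℝ) : ℂ) * (t * deriv g (t • θ)) = L at hIBP ⊢
  generalize ∫ t in (0:ℝ)..1, (((1 - t) ^ (β - 1) : ℝ) : ℂ) * g (t • θ) = A at hIBP ⊢
  generalize ∫ t in (0:ℝ)..1, (((1 - t) ^ β : ℝ) : ℂ) * g (t • θ) = B at hIBP ⊢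
  field_simp
  linear_combination θ ^ (β : ℂ) * hIBP

lemma iteratedDeriv_Pfrac_eq (hU : IsOpen U) (hstar : StarConvex ℝ 0 U)
    (hg : DifferentiableOn ℂ g U) {α : ℝ} (hα : 0 < α) (n : ℕ) (hθ : θ ∈ U)
    (hθs : θ ∈ slitPlane) :
    iteratedDeriv n (Pfrac α g) θ
      = (∑ p ∈ Finset.range n, iteratedDeriv p g 0 / Gamma ((α : ℂ) + p + 1) *
          ((descPochhammer ℂ n).eval ((α : ℂ) + p) * θ ^ ((α : ℂ) + p - n)))
        + Pfrac α (iteratedDeriv n g) θ := by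
  have key := eqOn_iteratedDeriv_of_hasDerivAt (F := Pfrac α g) (N := n)
    (G := fun k z => (∑ p ∈ Finset.range n, iteratedDeriv p g 0 / Gamma ((α : ℂ) + p + 1) *
      ((descPochhammer ℂ k).eval ((α : ℂ) + p) * z ^ ((α : ℂ) + p - k)))
      + Pfrac (α + n - k) (iteratedDeriv n g) z)
    (hU.inter isOpen_slitPlane) ?_ ?_ le_rfl ⟨hθ, hθs⟩
  · simpa using key
  · intro z hz
    simp only [descPochhammer_zero, Polynomial.eval_one, one_mul, CharP.cast_eq_zero, sub_zero]
    rw [Pfrac_eq_sum_add_Pfrac_iteratedDeriv hU hstar hg hα hz.1 n]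
    congr 1
    exact Finset.sum_congr rfl fun p _ => by ring
  · intro k hk z hz
    have hβ : 0 < α + n - (k + 1 : ℕ) := by
      have : ((k + 1 : ℕ) : ℝ) ≤ n := by exact_mod_cast hk
      linarith
    have hP := hasDerivAt_Pfrac_add_one hU hstar (hg.iteratedDeriv_of_isOpen hU n) hβ hz.1 hz.2
    rw [show α + n - (k + 1 : ℕ) + 1 = α + n - k by push_cast; ring] at hP
    exact (HasDerivAt.fun_sum fun p _ =>
      (hasDerivAt_descPochhammer_mul_cpow hz.2 _ k).const_mul _).add hP

end Pfrac

theorem stmt_9_general (U : Set ℂ) (hU : IsOpen U) (hstar : StarConvex ℝ 0 U)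
    (f : ℂ → ℂ) (hf : DifferentiableOn ℂ f U)
    (α : ℝ) (hα : 0 < α) (n : ℕ) :
    ∀ θ ∈ U, (0 < θ.re ∨ θ.im ≠ 0) →
      iteratedDeriv n (Pfrac α f) θ - Pfrac α (iteratedDeriv n f) θ
        = ∑ p ∈ Finset.range n,
            iteratedDeriv p f 0 * θ ^ ((α : ℂ) - (n : ℂ) + (p : ℂ)) /
              Complex.Gamma ((α : ℂ) - (n : ℂ) + (p : ℂ) + 1) := by
  intro θ hθ hθs
  rw [iteratedDeriv_Pfrac_eq hU hstar hf hα n hθ hθs, add_sub_cancel_right]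
  refine Finset.sum_congr rfl fun p _ => ?_
  have hΓ := descPochhammer_eval_mul_inv_Gamma_add_one ((α : ℂ) + p) n
  rw [show (α : ℂ) - n + p = α + p - n by ring]
  linear_combination iteratedDeriv p f 0 * θ ^ ((α : ℂ) + p - n) * hΓ

theorem stmt_9 (U : Set ℂ) (hU : IsOpen U) (hstar : StarConvex ℝ 0 U)
    (h0 : (0:ℂ) ∈ U) (f : ℂ → ℂ) (hf : DifferentiableOn ℂ f U)
    (α : ℝ) (hα : 0 < α) (n : ℕ) (hn : 0 < n) :
    ∀ θ ∈ U, (0 < θ.re ∨ θ.im ≠ 0) →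
      iteratedDeriv n (Pfrac α f) θ - Pfrac α (iteratedDeriv n f) θ
        = ∑ p ∈ Finset.range n,
            iteratedDeriv p f 0 * θ ^ ((α : ℂ) - (n : ℂ) + (p : ℂ)) /
              Complex.Gamma ((α : ℂ) - (n : ℂ) + (p : ℂ) + 1) :=
  stmt_9_general U hU hstar f hf α hα n
end
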